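/- Under the fund dynamics F 0 = p m * A m and F (j+1) = λ * F j - p (m+j+1), with A m the exact fair value, the fund is exactly exhausted at the end: F (N - m) = 0. -/

import Mathlib

/-!
After `j` years the fund holds `l ^ j` times its initial capital minus the present value of the
first `j` payments. Since the initial capital `p m * A m` is exactly the present value of all
`N - m` payments, nothing is left after the last one.
-/

open Finset

def presentValue {K : Type*} [Field K] (l : K) (a : ℕ → K) (n : ℕ) : K :=
  ∑ i ∈ range n, a i / l ^ (i + 1)

section Fund

variable {K : Type*} [Field K] {l : K} {a F : ℕ → K}

theorem presentValue_succ (l : K) (a : ℕ → K) (n : ℕ) :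
    presentValue l a (n + 1) = presentValue l a n + a n / l ^ (n + 1) :=
  sum_range_succ _ _

theorem fund_eq_pow_mul_sub_presentValue (hl : l ≠ 0) (hF : ∀ j, F (j + 1) = l * F j - a j)
    (j : ℕ) : F j = l ^ j * (F 0 - presentValue l a j) := by
  induction j with
  | zero => simp [presentValue]
  | succ j ih =>
    rw [hF, ih, presentValue_succ]
    field_simp
    ring

theorem fund_eq_zero_of_eq_presentValue (hl : l ≠ 0) (hF : ∀ j, F (j + 1) = l * F j - a j)
    {n : ℕ} (h0 : F 0 = presentValue l a n) : F n = 0 := by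
  rw [fund_eq_pow_mul_sub_presentValue hl hF, h0, sub_self, mul_zero]

end Fund

theorem euler_fund_exhausted_general (l : ℝ) (hl : 1 < l) (N m : ℕ) (hm : m ≤ N)
    (p : ℕ → ℝ) (hp : ∀ k ≤ N, 0 < p k)
    (A : ℝ)
    (hA : A = (1 / p m) * ∑ k ∈ Finset.range (N - m), p (m + k + 1) / l ^ (k + 1))
    (F : ℕ → ℝ) (hF0 : F 0 = p m * A)
    (hFs : ∀ j, F (j + 1) = l * F j - p (m + j + 1)) :
    F (N - m) = 0 := by
  have hpm : p m ≠ 0 := (hp m hm).ne'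
  refine fund_eq_zero_of_eq_presentValue (zero_lt_one.trans hl).ne' hFs ?_
  rw [hF0, hA, presentValue, ← mul_assoc, mul_one_div_cancel hpm, one_mul]

/-- §8: the capital is entirely extinguished exactly when the annuitants are dead. -/
theorem euler_fund_exhausted (l : ℝ) (hl : 1 < l) (N m : ℕ) (hm : m ≤ N)
    (p : ℕ → ℝ) (hp : ∀ k ≤ N, 0 < p k) (hp0 : ∀ k, N < k → p k = 0)
    (A : ℝ)
    (hA : A = (1 / p m) * ∑ k ∈ Finset.range (N - m), p (m + k + 1) / l ^ (k + 1))
    (F : ℕ → ℝ) (hF0 : F 0 = p m * A)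
    (hFs : ∀ j, F (j + 1) = l * F j - p (m + j + 1)) :
    F (N - m) = 0 :=
  euler_fund_exhausted_general l hl N m hm p hp A hA F hF0 hFs
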